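/- Fix κ>0, ν∈(−1,1/2], γ>0 and C² functions f_rad,g:(0,∞)→ℝ with f_rad(1)=0, f'_rad(1)=(1−ν)/(1+ν), g(1)=0, g'(1)=1, and define p̂_rad(δ,η)=κ(3f_rad(δ/η)η^γ+g(η)) on (0,∞)². If there exists y_b>0 such that the map η↦p̂_rad(y_b η,η) is constant on (0,∞), then f_rad(y_b)=−1/(3γ) and g(η)=(η^γ−1)/γ for all η>0. If moreover f'_rad(y)>0 for all y>0, then such a y_b is unique. -/

import Mathlib

/-!
Along the ray `δ = y_b η` the shear argument `δ / η` is frozen at `y_b`, so the CBS condition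
reads `3 f_rad(y_b) η^γ + g(η) = 3 f_rad(y_b) + g(1)`: it determines `g` as a multiple of
`1 - η^γ`. Differentiating at `η = 1` and using `g'(1) = 1` pins the multiple, hence
`f_rad(y_b) = -1/(3γ)`; uniqueness of `y_b` follows since a strictly increasing `f_rad` takes
this value at most once.
-/

open Real Set Filter Topology

noncomputable section

/-- The scale-invariant radial pressure `p̂_rad(δ,η) = κ(3 f_rad(δ/η) η^γ + g(η))`. -/
def siPrad (κ γ : ℝ) (frad g : ℝ → ℝ) : ℝ → ℝ → ℝ :=
  fun δ η => κ * (3 * frad (δ / η) * η ^ γ + g η)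

def IsCBS (κ γ : ℝ) (frad g : ℝ → ℝ) (yb : ℝ) : Prop :=
  ∀ η : ℝ, 0 < η → siPrad κ γ frad g (yb * η) η = siPrad κ γ frad g yb 1

theorem siPrad_mul_right {κ γ : ℝ} {frad g : ℝ → ℝ} (y : ℝ) {η : ℝ} (hη : η ≠ 0) :
    siPrad κ γ frad g (y * η) η = κ * (3 * frad y * η ^ γ + g η) := by
  simp only [siPrad, mul_div_cancel_right₀ _ hη]

theorem hasDerivAt_one_of_eqOn_mul_one_sub_rpow {f : ℝ → ℝ} {c γ : ℝ}
    (hf : EqOn f (fun η => c * (1 - η ^ γ)) (Ioi 0)) : HasDerivAt f (-(c * γ)) 1 := by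
  have hmodel : HasDerivAt (fun η : ℝ => c * (1 - η ^ γ)) (c * (0 - γ * 1 ^ (γ - 1))) 1 :=
    ((hasDerivAt_const _ _).sub (hasDerivAt_rpow_const (Or.inl one_ne_zero))).const_mul c
  rw [one_rpow, zero_sub, mul_one, mul_neg] at hmodel
  exact hmodel.congr_of_eventuallyEq (eventually_of_mem (Ioi_mem_nhds one_pos) hf)

namespace IsCBS

variable {κ γ : ℝ} {frad g : ℝ → ℝ} {yb : ℝ}

theorem eqOn_g (hκ : κ ≠ 0) (hg1 : g 1 = 0) (h : IsCBS κ γ frad g yb) :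
    EqOn g (fun η => 3 * frad yb * (1 - η ^ γ)) (Ioi 0) := by
  intro η hη
  have hconst := h η hη
  rw [siPrad_mul_right yb (ne_of_gt hη), ← mul_one yb, siPrad_mul_right yb one_ne_zero,
    mul_one, one_rpow, hg1] at hconst
  linarith [mul_left_cancel₀ hκ hconst]

theorem frad_eq (hκ : κ ≠ 0) (hγ : γ ≠ 0) (hg1 : g 1 = 0) (hg1' : deriv g 1 = 1)
    (h : IsCBS κ γ frad g yb) : frad yb = -(1 / (3 * γ)) := by
  have hderiv := (hasDerivAt_one_of_eqOn_mul_one_sub_rpow (h.eqOn_g hκ hg1)).deriv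
  rw [hg1'] at hderiv
  field_simp
  linarith

theorem g_eq (hκ : κ ≠ 0) (hγ : γ ≠ 0) (hg1 : g 1 = 0) (hg1' : deriv g 1 = 1)
    (h : IsCBS κ γ frad g yb) {η : ℝ} (hη : 0 < η) : g η = (η ^ γ - 1) / γ := by
  rw [h.eqOn_g hκ hg1 hη, h.frad_eq hκ hγ hg1 hg1']
  field_simp
  ring

end IsCBS

theorem cbs_characterization_general (κ γ : ℝ) (hκ : 0 < κ)
    (hγ : 0 < γ)
    (frad g : ℝ → ℝ)
    (hfr : ContDiffOn ℝ 2 frad (Ioi 0))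
    (hg1 : g 1 = 0) (hg1' : deriv g 1 = 1) :
    (∀ yb : ℝ, 0 < yb →
      (∀ η : ℝ, 0 < η → siPrad κ γ frad g (yb * η) η = siPrad κ γ frad g yb 1) →
      frad yb = -(1 / (3 * γ)) ∧ ∀ η : ℝ, 0 < η → g η = (η ^ γ - 1) / γ) ∧
    ((∀ y : ℝ, 0 < y → 0 < deriv frad y) →
      ∀ yb₁ yb₂ : ℝ, 0 < yb₁ → 0 < yb₂ →
      (∀ η : ℝ, 0 < η → siPrad κ γ frad g (yb₁ * η) η = siPrad κ γ frad g yb₁ 1) →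
      (∀ η : ℝ, 0 < η → siPrad κ γ frad g (yb₂ * η) η = siPrad κ γ frad g yb₂ 1) →
      yb₁ = yb₂) := by
  have frad_eq {yb : ℝ} (h : IsCBS κ γ frad g yb) : frad yb = -(1 / (3 * γ)) :=
    h.frad_eq hκ.ne' hγ.ne' hg1 hg1'
  refine ⟨fun yb _ (h : IsCBS κ γ frad g yb) =>
    ⟨frad_eq h, fun η hη => h.g_eq hκ.ne' hγ.ne' hg1 hg1' hη⟩, ?_⟩
  intro hpos yb₁ yb₂ h₁ h₂ hcbs₁ hcbs₂
  have hmono : StrictMonoOn frad (Ioi 0) :=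
    strictMonoOn_of_deriv_pos (convex_Ioi 0) hfr.continuousOn
      (fun y hy => hpos y (by rwa [interior_Ioi] at hy))
  exact hmono.injOn h₁ h₂ ((frad_eq hcbs₁).trans (frad_eq hcbs₂).symm)

/-- Constant Boundary Shear: if `η ↦ p̂_rad(y_b η, η)` is constant on `(0,∞)` for some
`y_b > 0`, then `f_rad(y_b) = −1/(3γ)` and `g(η) = (η^γ − 1)/γ`; if moreover
`f'_rad > 0` on `(0,∞)`, such a `y_b` is unique. -/
theorem cbs_characterization (κ ν γ : ℝ) (hκ : 0 < κ)
    (hν : ν ∈ Ioc (-1 : ℝ) (1/2)) (hγ : 0 < γ)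
    (frad g : ℝ → ℝ)
    (hfr : ContDiffOn ℝ 2 frad (Ioi 0)) (hg : ContDiffOn ℝ 2 g (Ioi 0))
    (hfr1 : frad 1 = 0) (hfr1' : deriv frad 1 = (1 - ν) / (1 + ν))
    (hg1 : g 1 = 0) (hg1' : deriv g 1 = 1) :
    (∀ yb : ℝ, 0 < yb →
      (∀ η : ℝ, 0 < η → siPrad κ γ frad g (yb * η) η = siPrad κ γ frad g yb 1) →
      frad yb = -(1 / (3 * γ)) ∧ ∀ η : ℝ, 0 < η → g η = (η ^ γ - 1) / γ) ∧
    ((∀ y : ℝ, 0 < y → 0 < deriv frad y) →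
      ∀ yb₁ yb₂ : ℝ, 0 < yb₁ → 0 < yb₂ →
      (∀ η : ℝ, 0 < η → siPrad κ γ frad g (yb₁ * η) η = siPrad κ γ frad g yb₁ 1) →
      (∀ η : ℝ, 0 < η → siPrad κ γ frad g (yb₂ * η) η = siPrad κ γ frad g yb₂ 1) →
      yb₁ = yb₂) :=
  cbs_characterization_general κ γ hκ hγ frad g hfr hg1 hg1'
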